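/- Let S be a finite set of points in the Euclidean plane and let T be a Euclidean minimum spanning tree of S, i.e., a connected acyclic graph on vertex set S whose sum of Euclidean edge lengths is minimal among all spanning trees of S. Then every edge of T is an edge of the relative neighbourhood graph RNG(S); that is, MST(S) ⊆ RNG(S). -/

import Mathlib

/-- The Euclidean length of an (unordered) edge on points of the plane. -/
noncomputable def edgeLength {S : Finset (EuclideanSpace ℝ (Fin 2))} :
    Sym2 {x // x ∈ S} → ℝ :=
  Sym2.lift ⟨fun a b => dist (a : EuclideanSpace ℝ (Fin 2)) (b : EuclideanSpace ℝ (Fin 2)),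
    fun _ _ => dist_comm _ _⟩

/-!
Deleting the tree edge `ab` splits a minimum spanning tree into two components, one containing
`a` and one containing `b`. A third point `c` lies in one of them, say with `a`; then `cb` reconnects
the two components, so exchanging `ab` for `cb` gives another spanning tree, and minimality forces
`|ab| ≤ |cb|`. Hence `c` cannot be strictly closer than `|ab|` to both `a` and `b`.
-/

namespace SimpleGraph

variable {V : Type*} {G T : SimpleGraph V}

lemma Reachable.deleteEdges_reachable_or {u a b : V} (h : G.Reachable u a) :
    (G.deleteEdges {s(a, b)}).Reachable u a ∨ (G.deleteEdges {s(a, b)}).Reachable u b := by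
  rw [reachable_iff_reflTransGen] at h
  induction h using Relation.ReflTransGen.head_induction_on with
  | refl => exact .inl .rfl
  | @head u w huw _ ih =>
    by_cases he : s(u, w) = s(a, b)
    · rcases Sym2.eq_iff.mp he with ⟨rfl, -⟩ | ⟨rfl, -⟩
      exacts [.inl .rfl, .inr .rfl]
    · have hadj : (G.deleteEdges {s(a, b)}).Adj u w := deleteEdges_adj.mpr ⟨huw, he⟩
      exact ih.imp hadj.reachable.trans hadj.reachable.trans

lemma IsTree.not_reachable_deleteEdges {a b : V} (hT : T.IsTree) (hab : T.Adj a b) :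
    ¬ (T.deleteEdges {s(a, b)}).Reachable a b :=
  isBridge_iff.mp (isAcyclic_iff_forall_adj_isBridge.mp hT.isAcyclic hab)

lemma IsTree.exchange {a b x y : V} (hT : T.IsTree) (hab : T.Adj a b)
    (hx : (T.deleteEdges {s(a, b)}).Reachable x a) (hy : (T.deleteEdges {s(a, b)}).Reachable y b) :
    (T.deleteEdges {s(a, b)} ⊔ edge x y).IsTree := by
  set G := T.deleteEdges {s(a, b)}
  have hxy : ¬ G.Reachable x y := fun h ↦
    hT.not_reachable_deleteEdges hab ((hx.symm.trans h).trans hy)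
  have hGle : G ≤ G ⊔ edge x y := le_sup_left
  have hba : (G ⊔ edge x y).Reachable b a := by
    have hxy' : (G ⊔ edge x y).Adj y x :=
      Or.inr ((edge_adj ..).mpr ⟨Or.inr ⟨rfl, rfl⟩, fun h ↦ hxy (h ▸ .rfl)⟩)
    exact ((hy.mono hGle).symm.trans hxy'.reachable).trans (hx.mono hGle)
  refine ⟨(connected_iff_exists_forall_reachable _).mpr ⟨a, fun u ↦ ?_⟩,
    (hT.isAcyclic.anti (deleteEdges_le _)).sup_edge_of_not_reachable hxy⟩
  rcases (hT.connected u a).deleteEdges_reachable_or (b := b) with hu | hu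
  · exact (hu.mono hGle).symm
  · exact (hu.mono hGle).trans hba |>.symm

section Weight

variable {M : Type*} [AddCommMonoid M] (w : Sym2 V → M)

lemma finsum_mem_edgeSet_eq_add_deleteEdges [Finite V] {a b : V} (hab : G.Adj a b) :
    ∑ᶠ e ∈ G.edgeSet, w e = w s(a, b) + ∑ᶠ e ∈ (G.deleteEdges {s(a, b)}).edgeSet, w e := by
  rw [← finsum_mem_insert w (by simp) (Set.toFinite _), edgeSet_deleteEdges,
    Set.insert_sdiff_singleton, Set.insert_eq_of_mem (G.mem_edgeSet.mpr hab)]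

lemma finsum_mem_edgeSet_sup_edge [Finite V] {x y : V} (hxy : x ≠ y) (hn : ¬ G.Adj x y) :
    ∑ᶠ e ∈ (G ⊔ edge x y).edgeSet, w e = w s(x, y) + ∑ᶠ e ∈ G.edgeSet, w e := by
  rw [edgeSet_sup, edgeSet_edge_of_ne hxy, Set.union_singleton,
    finsum_mem_insert w hn (Set.toFinite _)]

def IsMinSpanningTree [PartialOrder M] (T : SimpleGraph V) : Prop :=
  T.IsTree ∧ ∀ T' : SimpleGraph V, T'.IsTree → ∑ᶠ e ∈ T.edgeSet, w e ≤ ∑ᶠ e ∈ T'.edgeSet, w e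

variable {w}

/-- The cut property of minimum spanning trees. -/
theorem IsMinSpanningTree.weight_le [Finite V] [PartialOrder M] [IsOrderedCancelAddMonoid M]
    (hT : IsMinSpanningTree w T) {a b x y : V} (hab : T.Adj a b)
    (hx : (T.deleteEdges {s(a, b)}).Reachable x a) (hy : (T.deleteEdges {s(a, b)}).Reachable y b) :
    w s(a, b) ≤ w s(x, y) := by
  obtain ⟨hT, hmin⟩ := hT
  have hxy : ¬ (T.deleteEdges {s(a, b)}).Reachable x y := fun h ↦
    hT.not_reachable_deleteEdges hab ((hx.symm.trans h).trans hy)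
  have hne : x ≠ y := fun h ↦ hxy (h ▸ .rfl)
  have hle := hmin _ (hT.exchange hab hx hy)
  rwa [finsum_mem_edgeSet_eq_add_deleteEdges w hab,
    finsum_mem_edgeSet_sup_edge w hne (fun h ↦ hxy h.reachable), add_le_add_iff_right] at hle

end Weight

end SimpleGraph

/-- Every edge of a Euclidean minimum spanning tree of a finite set `S` of points in the
plane is an edge of the relative neighbourhood graph of `S`: `MST(S) ⊆ RNG(S)`. -/
theorem mst_subset_rng
    (S : Finset (EuclideanSpace ℝ (Fin 2)))
    (T : SimpleGraph {x // x ∈ S})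
    (hT : T.IsTree)
    (hmin : ∀ T' : SimpleGraph {x // x ∈ S}, T'.IsTree →
      (∑ᶠ e ∈ T.edgeSet, edgeLength e) ≤ ∑ᶠ e ∈ T'.edgeSet, edgeLength e)
    (a b : {x // x ∈ S}) (hadj : T.Adj a b) :
    ∀ c ∈ S, c ≠ (a : EuclideanSpace ℝ (Fin 2)) → c ≠ (b : EuclideanSpace ℝ (Fin 2)) →
      ¬ (dist c (a : EuclideanSpace ℝ (Fin 2)) < dist (a : EuclideanSpace ℝ (Fin 2)) b ∧
         dist c (b : EuclideanSpace ℝ (Fin 2)) < dist (a : EuclideanSpace ℝ (Fin 2)) b) := by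
  intro c hcS _ _ ⟨hca, hcb⟩
  have hT' : T.IsMinSpanningTree edgeLength := ⟨hT, hmin⟩
  set c' : {x // x ∈ S} := ⟨c, hcS⟩
  have hlen : ∀ x y : {x // x ∈ S}, edgeLength s(x, y) = dist (x : EuclideanSpace ℝ (Fin 2)) y :=
    fun _ _ ↦ rfl
  rcases (hT.connected c' a).deleteEdges_reachable_or (b := b) with hc | hc
  · have := hT'.weight_le hadj hc (.refl b)
    rw [hlen, hlen] at this
    exact (this.trans_lt hcb).false
  · rw [Sym2.eq_swap] at hc
    have := hT'.weight_le hadj.symm hc (.refl a)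
    rw [hlen, hlen, _root_.dist_comm] at this
    exact (this.trans_lt hca).false
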